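/- arXiv:1806.08201 — 3 statements merged into one kernel-verified Lean document; each statement's English description precedes it below -/
import Mathlib

section
/- Let X be a random vector in ℝᵈ with negatively correlated coordinates, i.e., for all disjoint index sets I, J ⊆ {1,…,d} and nonnegative reals sᵢ, tⱼ one has P(∀i∈I |Xᵢ| > sᵢ, ∀j∈J |Xⱼ| > tⱼ) ≤ P(∀i∈I |Xᵢ| > sᵢ)·P(∀j∈J |Xⱼ| > tⱼ). Suppose moreover X takes values in [0,∞)ᵈ. Then for any p > 0, distinct vertices k, l of the complete graph on n vertices whose edge set indexes the coordinates of X, the probability that both k and l are isolated in the graph G_{X,p} (where edge {i,j} is present iff X_{{i,j}} ≤ p) satisfies P(k and l both isolated) ≤ P(k isolated)·(P(l isolated) + P(X_{{k,l}} ≤ p)). -/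
open MeasureTheory

/-- The type of edges of the complete graph on `Fin n`. -/
def EdgeIdx (n : ℕ) := {e : Sym2 (Fin n) // ¬ e.IsDiag}

/-- The edge joining two distinct vertices. -/
def mkEdge {n : ℕ} (i j : Fin n) (h : i ≠ j) : EdgeIdx n :=
  ⟨s(i, j), by simpa [Sym2.mk_isDiag_iff] using h⟩

/-- `X` has negatively correlated coordinates. -/
def NegCorrelated {Ω : Type*} [MeasurableSpace Ω] (μ : Measure Ω) {ι : Type*}
    (X : ι → Ω → ℝ) : Prop :=
  ∀ (I J : Finset ι), Disjoint I J → ∀ s t : ι → ℝ,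
    (∀ i, 0 ≤ s i) → (∀ j, 0 ≤ t j) →
    μ {ω | (∀ i ∈ I, s i < |X i ω|) ∧ (∀ j ∈ J, t j < |X j ω|)} ≤
      μ {ω | ∀ i ∈ I, s i < |X i ω|} * μ {ω | ∀ j ∈ J, t j < |X j ω|}

/-- Vertex `v` is isolated in `G_{X,p}` at sample point `ω`. -/
def IsolatedAt {n : ℕ} {Ω : Type*} (X : EdgeIdx n → Ω → ℝ) (p : ℝ) (v : Fin n)
    (ω : Ω) : Prop :=
  ∀ i, ∀ h : i ≠ v, p < X (mkEdge i v h) ω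

lemma edge_eq_mkEdge {n : ℕ} (e : EdgeIdx n) {v : Fin n} (hv : v ∈ e.val) :
    ∃ i, ∃ h : i ≠ v, e = mkEdge i v h := by
  obtain ⟨e, hd⟩ := e
  induction e using Sym2.ind with
  | _ a b =>
    rw [Sym2.mem_iff] at hv
    rcases hv with rfl | rfl
    · have hb : b ≠ v := fun h => hd (by simp [h, Sym2.mk_isDiag_iff])
      exact ⟨b, hb, Subtype.ext (Sym2.eq_swap)⟩
    · have ha : a ≠ v := fun h => hd (by simp [h, Sym2.mk_isDiag_iff])
      exact ⟨a, ha, Subtype.ext rfl⟩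

lemma mem_mkEdge_left {n : ℕ} (i v : Fin n) (h : i ≠ v) : i ∈ (mkEdge i v h).val := by
  simp [mkEdge]

lemma mem_mkEdge_right {n : ℕ} (i v : Fin n) (h : i ≠ v) : v ∈ (mkEdge i v h).val := by
  simp [mkEdge]

theorem two_isolated_vertices_bound {Ω : Type*} [MeasurableSpace Ω]
    (μ : Measure Ω) [IsProbabilityMeasure μ] (n : ℕ) (hn : 2 ≤ n)
    (X : EdgeIdx n → Ω → ℝ)
    (hmeas : ∀ e, Measurable (X e))
    (hnonneg : ∀ e ω, 0 ≤ X e ω)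
    (hnc : NegCorrelated μ X)
    (p : ℝ) (hp : 0 < p) (k l : Fin n) (hkl : k ≠ l) :
    μ {ω | IsolatedAt X p k ω ∧ IsolatedAt X p l ω} ≤
      μ {ω | IsolatedAt X p k ω} *
        (μ {ω | IsolatedAt X p l ω} + μ {ω | X (mkEdge k l hkl) ω ≤ p}) := by
  classical
  haveI : DecidableEq (EdgeIdx n) := fun a b => by
    unfold EdgeIdx; infer_instance
  haveI : Fintype (EdgeIdx n) := by unfold EdgeIdx; infer_instance
  set I : Finset (EdgeIdx n) := Finset.univ.filter (fun e => k ∈ e.val) with hI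
  set J : Finset (EdgeIdx n) :=
    Finset.univ.filter (fun e => l ∈ e.val ∧ k ∉ e.val) with hJ
  have habs : ∀ e ω, |X e ω| = X e ω := fun e ω => abs_of_nonneg (hnonneg e ω)
  have hdisj : Disjoint I J := by
    rw [Finset.disjoint_left]
    intro e heI heJ
    rw [hI, Finset.mem_filter] at heI
    rw [hJ, Finset.mem_filter] at heJ
    exact heJ.2.2 heI.2
  -- the I-event is the event that k is isolated
  have hkIeq : {ω | ∀ e ∈ I, p < |X e ω|} = {ω | IsolatedAt X p k ω} := by
    ext ω
    simp only [Set.mem_setOf_eq, habs]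
    constructor
    · intro h i hi
      exact h (mkEdge i k hi) (by simp [hI, mem_mkEdge_right])
    · intro h e he
      rw [hI, Finset.mem_filter] at he
      obtain ⟨i, hi, rfl⟩ := edge_eq_mkEdge e he.2
      exact h i hi
  -- the J-event
  set B : Set Ω := {ω | ∀ e ∈ J, p < |X e ω|} with hB
  -- both isolated implies the joint event
  have hsub : {ω | IsolatedAt X p k ω ∧ IsolatedAt X p l ω} ⊆
      {ω | (∀ e ∈ I, p < |X e ω|) ∧ (∀ e ∈ J, p < |X e ω|)} := by
    intro ω ⟨hk, hl⟩
    constructor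
    · exact (Set.ext_iff.mp hkIeq ω).mpr hk
    · intro e he
      rw [hJ, Finset.mem_filter] at he
      obtain ⟨i, hi, rfl⟩ := edge_eq_mkEdge e he.2.1
      rw [habs]
      exact hl i hi
  have hBsub : B ⊆ {ω | IsolatedAt X p l ω} ∪ {ω | X (mkEdge k l hkl) ω ≤ p} := by
    intro ω hω
    by_cases hkl' : X (mkEdge k l hkl) ω ≤ p
    · exact Or.inr hkl'
    · left
      intro i hi
      by_cases hik : i = k
      · subst hik
        have : mkEdge i l hi = mkEdge i l hkl := rfl
        push_neg at hkl'
        exact hkl'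
      · have hmem : (mkEdge i l hi) ∈ J := by
          rw [hJ, Finset.mem_filter]
          refine ⟨Finset.mem_univ _, mem_mkEdge_right i l hi, ?_⟩
          simp only [mkEdge, Sym2.mem_iff]
          push_neg
          exact ⟨fun h => hik h.symm, hkl⟩
        have := hω _ hmem
        rwa [habs] at this
  have key := hnc I J hdisj (fun _ => p) (fun _ => p)
    (fun _ => hp.le) (fun _ => hp.le)
  calc μ {ω | IsolatedAt X p k ω ∧ IsolatedAt X p l ω}
      ≤ μ {ω | (∀ e ∈ I, p < |X e ω|) ∧ (∀ e ∈ J, p < |X e ω|)} :=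
        measure_mono hsub
    _ ≤ μ {ω | ∀ e ∈ I, p < |X e ω|} * μ B := key
    _ = μ {ω | IsolatedAt X p k ω} * μ B := by rw [hkIeq]
    _ ≤ μ {ω | IsolatedAt X p k ω} *
        (μ {ω | IsolatedAt X p l ω} + μ {ω | X (mkEdge k l hkl) ω ≤ p}) := by
        refine mul_le_mul_right ?_ _
        exact (measure_mono hBsub).trans (measure_union_le _ _)
end

section
/- Let X be a random vector in [0,∞)ᵈ with negatively correlated coordinates indexing the edges of the complete graph on n vertices, and let Y be the number of isolated vertices of G_{X,p}. Suppose that for every edge e, P(X_e ≤ p) ≤ q. Then E[Y²] ≤ E[Y] + (E[Y])² + n·q·E[Y]. -/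
open MeasureTheory
open scoped Classical

/-- The number of isolated vertices of `G_{X,p}`. -/
noncomputable def numIsolated {n : ℕ} {Ω : Type*} (X : EdgeIdx n → Ω → ℝ) (p : ℝ)
    (ω : Ω) : ℝ :=
  ∑ v : Fin n, if IsolatedAt X p v ω then (1 : ℝ) else 0

/-!
Write `A_v` for the event that `v` is isolated, so `E[Y] = ∑ P(A_v)` and
`E[Y²] = ∑_{u,v} P(A_u ∩ A_v)`. The diagonal contributes `E[Y]`. For `u ≠ v`, the event `A_u ∩ A_v`
is contained in "all edges at `u` other than `uv` exceed `p`" ∩ `A_v`, two events about disjoint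
sets of edges, so negative correlation bounds its probability by `(P(A_u) + P(X_uv ≤ p)) P(A_v)
≤ (P(A_u) + q) P(A_v)`. Summing over `u ≠ v` gives at most `E[Y]² + n q E[Y]`.
-/

section Probability

variable {Ω : Type*} [MeasurableSpace Ω] {μ : Measure Ω}

theorem integral_sum_indicator_one [IsFiniteMeasure μ] {ι : Type*} [Fintype ι]
    {A : ι → Set Ω} (hA : ∀ i, MeasurableSet (A i)) :
    ∫ ω, ∑ i, (A i).indicator 1 ω ∂μ = ∑ i, μ.real (A i) := by
  rw [integral_finsetSum _ fun i _ => ?_]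
  · exact Finset.sum_congr rfl fun i _ => integral_indicator_one (hA i)
  · exact (integrable_const (1 : ℝ)).indicator (hA i)

theorem integral_sq_sum_indicator_one [IsFiniteMeasure μ] {ι : Type*} [Fintype ι]
    {A : ι → Set Ω} (hA : ∀ i, MeasurableSet (A i)) :
    ∫ ω, (∑ i, (A i).indicator 1 ω) ^ 2 ∂μ = ∑ i, ∑ j, μ.real (A i ∩ A j) := by
  have hsq : ∀ ω, (∑ i, (A i).indicator (1 : Ω → ℝ) ω) ^ 2 =
      ∑ i, ∑ j, (A i ∩ A j).indicator 1 ω := fun ω => by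
    simp only [sq, Finset.sum_mul_sum, Set.inter_indicator_one, Pi.mul_apply]
  simp_rw [hsq]
  rw [integral_finsetSum _ fun i _ => ?_]
  · exact Finset.sum_congr rfl fun i _ => integral_sum_indicator_one fun j => (hA i).inter (hA j)
  · exact integrable_finsetSum _ fun j _ =>
      (integrable_const (1 : ℝ)).indicator ((hA i).inter (hA j))

theorem sum_sum_measureReal_inter_le {ι : Type*} [Fintype ι] (A : ι → Set Ω) {q : ℝ}
    (hq : 0 ≤ q)
    (hpair : ∀ i j, i ≠ j → μ.real (A i ∩ A j) ≤ (μ.real (A i) + q) * μ.real (A j)) :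
    ∑ i, ∑ j, μ.real (A i ∩ A j) ≤
      ∑ i, μ.real (A i) + (∑ i, μ.real (A i)) ^ 2 + Fintype.card ι * q * ∑ i, μ.real (A i) := by
  have hterm : ∀ i j, μ.real (A i ∩ A j) ≤
      (if i = j then μ.real (A j) else 0) + (μ.real (A i) + q) * μ.real (A j) := by
    intro i j
    rcases eq_or_ne i j with rfl | hij
    · rw [Set.inter_self, if_pos rfl]
      have := measureReal_nonneg (μ := μ) (s := A i)
      nlinarith
    · simpa [hij] using hpair i j hij
  calc ∑ i, ∑ j, μ.real (A i ∩ A j)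
      ≤ ∑ i, ∑ j, ((if i = j then μ.real (A j) else 0) + (μ.real (A i) + q) * μ.real (A j)) :=
        Finset.sum_le_sum fun i _ => Finset.sum_le_sum fun j _ => hterm i j
    _ = _ := by
        simp only [Finset.sum_add_distrib, Finset.sum_ite_eq, Finset.mem_univ, if_pos,
          ← Finset.mul_sum, ← Finset.sum_mul, Finset.sum_const, Finset.card_univ, nsmul_eq_mul]
        ring

theorem NegCorrelated.measureReal_inter_le [IsFiniteMeasure μ] {ι : Type*} {X : ι → Ω → ℝ}
    (hX : NegCorrelated μ X) (hnonneg : ∀ i ω, 0 ≤ X i ω) {p : ℝ} (hp : 0 ≤ p)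
    {I J : Finset ι} (hIJ : Disjoint I J) :
    μ.real ({ω | ∀ i ∈ I, p < X i ω} ∩ {ω | ∀ j ∈ J, p < X j ω}) ≤
      μ.real {ω | ∀ i ∈ I, p < X i ω} * μ.real {ω | ∀ j ∈ J, p < X j ω} := by
  have h := hX I J hIJ (fun _ => p) (fun _ => p) (fun _ => hp) (fun _ => hp)
  simp only [fun i ω => abs_of_nonneg (hnonneg i ω)] at h
  rw [measureReal_def, measureReal_def, measureReal_def, ← ENNReal.toReal_mul]
  exact ENNReal.toReal_mono (by finiteness) h

end Probability

noncomputable instance (n : ℕ) : Fintype (EdgeIdx n) := by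
  unfold EdgeIdx; infer_instance

noncomputable def edgesAt {n : ℕ} (v : Fin n) : Finset (EdgeIdx n) := {e | v ∈ e.1}

theorem mem_edgesAt {n : ℕ} {v : Fin n} {e : EdgeIdx n} : e ∈ edgesAt v ↔ v ∈ e.1 := by
  simp [edgesAt]

theorem exists_eq_mkEdge_of_mem {n : ℕ} {v : Fin n} {e : EdgeIdx n} (hv : v ∈ e.1) :
    ∃ (i : Fin n) (h : i ≠ v), e = mkEdge i v h := by
  obtain ⟨e, he⟩ := e
  induction e using Sym2.ind with
  | _ a b =>
    rw [Sym2.mk_isDiag_iff] at he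
    rcases Sym2.mem_iff.1 hv with rfl | rfl
    · exact ⟨b, Ne.symm he, Subtype.ext Sym2.eq_swap⟩
    · exact ⟨a, he, rfl⟩

theorem eq_mkEdge_of_mem_edgesAt {n : ℕ} {u v : Fin n} (huv : u ≠ v) {e : EdgeIdx n}
    (hu : e ∈ edgesAt u) (hv : e ∈ edgesAt v) : e = mkEdge u v huv :=
  Subtype.ext <| (Sym2.mem_and_mem_iff huv).1 ⟨mem_edgesAt.1 hu, mem_edgesAt.1 hv⟩

section Isolated

variable {n : ℕ} {Ω : Type*} {X : EdgeIdx n → Ω → ℝ} {p : ℝ}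

theorem setOf_isolatedAt_eq (v : Fin n) :
    {ω | IsolatedAt X p v ω} = {ω | ∀ e ∈ edgesAt v, p < X e ω} := by
  ext ω
  refine ⟨fun h e he => ?_, fun h i hi => h _ (mem_edgesAt.2 (Sym2.mem_mk_right i v))⟩
  obtain ⟨i, hi, rfl⟩ := exists_eq_mkEdge_of_mem (mem_edgesAt.1 he)
  exact h i hi

theorem numIsolated_eq_sum_indicator :
    numIsolated X p = fun ω => ∑ v, {ω | IsolatedAt X p v ω}.indicator 1 ω := by
  ext ω
  simp only [numIsolated, Set.indicator_apply, Set.mem_ofPred_eq, Pi.one_apply]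

theorem measurableSet_isolatedAt [MeasurableSpace Ω] (hX : ∀ e, Measurable (X e)) (v : Fin n) :
    MeasurableSet {ω | IsolatedAt X p v ω} := by
  rw [setOf_isolatedAt_eq]
  exact Measurable.setOf (Measurable.forall fun e => Measurable.forall fun _ =>
    measurableSet_setOfPred.1 (measurableSet_lt measurable_const (hX e)))

theorem setOf_forall_sdiff_edgesAt_subset {u v : Fin n} (huv : u ≠ v) :
    {ω | ∀ e ∈ edgesAt u \ edgesAt v, p < X e ω} ⊆
      {ω | IsolatedAt X p u ω} ∪ {ω | X (mkEdge u v huv) ω ≤ p} := by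
  intro ω hω
  by_cases huv_le : X (mkEdge u v huv) ω ≤ p
  · exact Or.inr huv_le
  refine Or.inl ((setOf_isolatedAt_eq u).superset fun e he => ?_)
  by_cases hev : e ∈ edgesAt v
  · rw [eq_mkEdge_of_mem_edgesAt huv he hev]
    exact not_le.1 huv_le
  · exact hω e (Finset.mem_sdiff.2 ⟨he, hev⟩)

theorem measureReal_isolatedAt_inter_le [MeasurableSpace Ω] {μ : Measure Ω} [IsFiniteMeasure μ]
    (hnonneg : ∀ e ω, 0 ≤ X e ω) (hnc : NegCorrelated μ X) (hp : 0 ≤ p)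
    {u v : Fin n} (huv : u ≠ v) :
    μ.real ({ω | IsolatedAt X p u ω} ∩ {ω | IsolatedAt X p v ω}) ≤
      (μ.real {ω | IsolatedAt X p u ω} + μ.real {ω | X (mkEdge u v huv) ω ≤ p}) *
        μ.real {ω | IsolatedAt X p v ω} := by
  set B := {ω | ∀ e ∈ edgesAt u \ edgesAt v, p < X e ω}
  have hAu_sub : {ω | IsolatedAt X p u ω} ⊆ B := by
    rw [setOf_isolatedAt_eq u]
    exact fun ω hω e he => hω e (Finset.mem_sdiff.1 he).1
  calc μ.real ({ω | IsolatedAt X p u ω} ∩ {ω | IsolatedAt X p v ω})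
      ≤ μ.real (B ∩ {ω | IsolatedAt X p v ω}) :=
        measureReal_mono (Set.inter_subset_inter_left _ hAu_sub)
    _ ≤ μ.real B * μ.real {ω | IsolatedAt X p v ω} := by
        rw [setOf_isolatedAt_eq v]
        exact hnc.measureReal_inter_le hnonneg hp Finset.sdiff_disjoint
    _ ≤ _ := by
        gcongr
        exact (measureReal_mono (setOf_forall_sdiff_edgesAt_subset huv)).trans
          (measureReal_union_le _ _)

end Isolated

theorem second_moment_isolated_vertices_general {Ω : Type*} [MeasurableSpace Ω]
    (μ : Measure Ω) [IsProbabilityMeasure μ] (n : ℕ)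
    (X : EdgeIdx n → Ω → ℝ)
    (hmeas : ∀ e, Measurable (X e))
    (hnonneg : ∀ e ω, 0 ≤ X e ω)
    (hnc : NegCorrelated μ X)
    (p : ℝ) (hp : 0 < p) (q : ℝ) (hq : 0 ≤ q)
    (hedge : ∀ e : EdgeIdx n, (μ {ω | X e ω ≤ p}).toReal ≤ q) :
    ∫ ω, (numIsolated X p ω) ^ 2 ∂μ ≤
      (∫ ω, numIsolated X p ω ∂μ) + (∫ ω, numIsolated X p ω ∂μ) ^ 2 +
        n * q * ∫ ω, numIsolated X p ω ∂μ := by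
  have hA := measurableSet_isolatedAt (p := p) hmeas
  rw [numIsolated_eq_sum_indicator, integral_sum_indicator_one hA,
    integral_sq_sum_indicator_one hA]
  simpa using sum_sum_measureReal_inter_le _ hq fun u v huv =>
    (measureReal_isolatedAt_inter_le hnonneg hnc hp.le huv).trans <| by
      gcongr
      exact hedge _

theorem second_moment_isolated_vertices {Ω : Type*} [MeasurableSpace Ω]
    (μ : Measure Ω) [IsProbabilityMeasure μ] (n : ℕ) (hn : 2 ≤ n)
    (X : EdgeIdx n → Ω → ℝ)
    (hmeas : ∀ e, Measurable (X e))
    (hnonneg : ∀ e ω, 0 ≤ X e ω)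
    (hnc : NegCorrelated μ X)
    (p : ℝ) (hp : 0 < p) (q : ℝ) (hq : 0 ≤ q)
    (hedge : ∀ e : EdgeIdx n, (μ {ω | X e ω ≤ p}).toReal ≤ q) :
    ∫ ω, (numIsolated X p ω) ^ 2 ∂μ ≤
      (∫ ω, numIsolated X p ω ∂μ) + (∫ ω, numIsolated X p ω ∂μ) ^ 2 +
        n * q * ∫ ω, numIsolated X p ω ∂μ :=
  second_moment_isolated_vertices_general μ n X hmeas hnonneg hnc p hp q hq hedge
end

section
/- Let X be a random vector in [0,∞)ᵈ indexing the edges of the complete graph Kₙ, and suppose that for every pair of disjoint edge sets S, T and every p > 0, P(∀s∈S X_s > p, ∀t∈T X_t ≤ p) ≤ e^{-a·p·|S|/M}·(b·p/σ)^{|T|} for constants a, b, M, σ > 0. Then the expected number of connected components of G_{X,p} with exactly k vertices is at most C(n,k)·k^{k-2}·e^{-a·p·k·(n-k)/M}·(b·p/σ)^{k-1}. -/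
/-!
A component of order `k` of `G_{X,p}` is witnessed by its vertex set `V` together with a spanning
tree `E` of it: the `k - 1` edges of `E` are at most `p`, and the `k (n - k)` edges leaving `V`
exceed `p`. By hypothesis this event has probability at most
`e^{-a p k (n-k) / M} (b p / σ)^{k-1}`, and distinct components have distinct witnesses, so the
expectation is at most that bound times the number of pairs `(V, E)`. There are `C(n, k)` choices
of `V`, and at most `k^{k-2}` spanning trees on each, because the Prüfer code is an injection
into `V^{k-2}`.
-/

open MeasureTheory

/-- The random graph `G_{X,p}` at sample point `ω`: `{i,j}` is an edge iff `X_{{i,j}} ω ≤ p`. -/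
def graphOf {n : ℕ} {Ω : Type*} (X : EdgeIdx n → Ω → ℝ) (p : ℝ) (ω : Ω) :
    SimpleGraph (Fin n) where
  Adj i j := ∃ h : i ≠ j, X (mkEdge i j h) ω ≤ p
  symm := by
    constructor
    rintro i j ⟨h, hx⟩
    refine ⟨h.symm, ?_⟩
    have : mkEdge j i h.symm = mkEdge i j h := Subtype.ext (Sym2.eq_swap)
    rwa [this]
  loopless := by constructor; rintro i ⟨h, -⟩; exact h rfl

/-- The number of connected components of order `k`. -/
noncomputable def numComponents {n : ℕ} {Ω : Type*} (X : EdgeIdx n → Ω → ℝ) (p : ℝ)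
    (k : ℕ) (ω : Ω) : ℕ :=
  Nat.card {c : (graphOf X p ω).ConnectedComponent // Nat.card c.supp = k}

open Finset SimpleGraph

lemma Finset.card_le_pow_of_injOn_list {α β : Type*} [DecidableEq α] {s : Finset β}
    {V : Finset α} {L : ℕ} (f : β → List α) (hf : Set.InjOn f s)
    (hlen : ∀ b ∈ s, (f b).length = L) (hmem : ∀ b ∈ s, ∀ x ∈ f b, x ∈ V) :
    #s ≤ #V ^ L := by
  have himage : s.image f ⊆ (Fintype.piFinset fun _ : Fin L ↦ V).image List.ofFn := by
    intro l hl
    obtain ⟨b, hb, rfl⟩ := mem_image.1 hl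
    obtain rfl := hlen b hb
    exact mem_image.2 ⟨fun i ↦ (f b)[i], Fintype.mem_piFinset.2 fun i ↦
      hmem b hb _ (List.getElem_mem _), List.ofFn_getElem⟩
  calc #s = #(s.image f) := (card_image_of_injOn hf).symm
    _ ≤ #((Fintype.piFinset fun _ : Fin L ↦ V).image List.ofFn) := card_le_card himage
    _ ≤ #(Fintype.piFinset fun _ : Fin L ↦ V) := card_image_le
    _ = #V ^ L := by simp

namespace EdgeFinset

section Degree

variable {α : Type*}

structure IsSpanningTree (V : Finset α) (E : Finset (Sym2 α)) : Prop where
  mem_of_mem_edge : ∀ e ∈ E, ∀ x ∈ e, x ∈ V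
  not_isDiag : ∀ e ∈ E, ¬ e.IsDiag
  card_add_one : #E + 1 = #V
  reachable : ∀ u ∈ V, ∀ v ∈ V, (fromEdgeSet (E : Set (Sym2 α))).Reachable u v

variable [DecidableEq α]

def degree (E : Finset (Sym2 α)) (v : α) : ℕ := #{e ∈ E | v ∈ e}

def leaves (V : Finset α) (E : Finset (Sym2 α)) : Finset α := {v ∈ V | degree E v = 1}

variable {V : Finset α} {E : Finset (Sym2 α)} {u v x : α}

lemma sum_degree_eq_two_mul_card (hV : ∀ e ∈ E, ∀ x ∈ e, x ∈ V) (hE : ∀ e ∈ E, ¬ e.IsDiag) :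
    ∑ v ∈ V, degree E v = 2 * #E := by
  have hends : ∀ e ∈ E, {x ∈ V | x ∈ e} = e.toFinset := fun e he ↦ by
    ext x
    simpa using fun hx ↦ hV e he x hx
  calc ∑ v ∈ V, degree E v = ∑ e ∈ E, #{x ∈ V | x ∈ e} :=
        sum_card_bipartiteAbove_eq_sum_card_bipartiteBelow (fun v e ↦ v ∈ e)
    _ = ∑ _e ∈ E, 2 := sum_congr rfl fun e he ↦ by
        rw [hends e he, Sym2.card_toFinset_of_not_isDiag e (hE e he)]
    _ = 2 * #E := by rw [sum_const, smul_eq_mul, mul_comm]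

lemma degree_erase_of_notMem {e : Sym2 α} (hx : x ∉ e) : degree (E.erase e) x = degree E x := by
  rw [degree, degree, filter_erase, erase_eq_of_notMem (by simp [hx])]

lemma degree_erase_add_one {e : Sym2 α} (he : e ∈ E) (hx : x ∈ e) :
    degree (E.erase e) x + 1 = degree E x := by
  rw [degree, degree, filter_erase, card_erase_add_one (mem_filter.2 ⟨he, hx⟩)]

lemma eq_of_degree_eq_one {e e' : Sym2 α} (hdeg : degree E v = 1) (he : e ∈ E) (hv : v ∈ e)
    (he' : e' ∈ E) (hv' : v ∈ e') : e = e' :=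
  card_le_one.1 hdeg.le e (mem_filter.2 ⟨he, hv⟩) e' (mem_filter.2 ⟨he', hv'⟩)

namespace IsSpanningTree

variable (h : IsSpanningTree V E)
include h

lemma one_le_degree (hV : 2 ≤ #V) (hv : v ∈ V) : 1 ≤ degree E v := by
  obtain ⟨w, hw, hwv⟩ := exists_mem_ne (by omega : 1 < #V) v
  obtain rfl | ⟨x, hadj, -⟩ :=
    ((reachable_iff_reflTransGen v w).1 (h.reachable v hv w hw)).cases_head
  · exact absurd rfl hwv
  exact card_pos.2 ⟨_, mem_filter.2 ⟨((fromEdgeSet_adj _).1 hadj).1, Sym2.mem_mk_left v x⟩⟩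

lemma leaves_nonempty (hV : 2 ≤ #V) : (leaves V E).Nonempty := by
  by_contra hL
  have hdeg : ∀ v ∈ V, 2 ≤ degree E v := fun v hv ↦ by
    have := h.one_le_degree hV hv
    have : degree E v ≠ 1 := fun h1 ↦ hL ⟨v, mem_filter.2 ⟨hv, h1⟩⟩
    omega
  have := sum_le_sum hdeg
  rw [sum_const, smul_eq_mul, sum_degree_eq_two_mul_card h.mem_of_mem_edge h.not_isDiag] at this
  have := h.card_add_one
  omega

lemma erase_leaf (hv : v ∈ leaves V E) (hvu : s(v, u) ∈ E) :
    IsSpanningTree (V.erase v) (E.erase s(v, u)) := by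
  have honly : ∀ e ∈ E, v ∈ e → e = s(v, u) := fun e he hve ↦
    eq_of_degree_eq_one (mem_filter.1 hv).2 he hve hvu (Sym2.mem_mk_left v u)
  refine ⟨fun e he x hx ↦ mem_erase.2 ⟨?_, h.mem_of_mem_edge e (mem_of_mem_erase he) x hx⟩,
    fun e he ↦ h.not_isDiag e (mem_of_mem_erase he), ?_, fun x hx y hy ↦ ?_⟩
  · rintro rfl
    exact (mem_erase.1 he).1 (honly e (mem_of_mem_erase he) hx)
  · have := h.card_add_one
    have := card_pos.2 ⟨_, hvu⟩
    rw [card_erase_of_mem hvu, card_erase_of_mem (mem_filter.1 hv).1]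
    omega
  -- contracting the edge `s(v, u)` onto `u` turns walks of `E` into walks of `E.erase s(v, u)`
  let f : α → α := fun z ↦ if z = v then u else z
  have hf : ∀ z ≠ v, f z = z := fun z hz ↦ if_neg hz
  have hlift : (fromEdgeSet (E : Set (Sym2 α))).Adj ≤
      Function.onFun (Relation.ReflTransGen (fromEdgeSet ↑(E.erase s(v, u))).Adj) f := by
    intro a b hab
    rw [fromEdgeSet_adj] at hab
    show Relation.ReflTransGen _ (f a) (f b)
    by_cases he : s(a, b) = s(v, u)
    · have : f a = f b := by
        rcases Sym2.eq_iff.1 he with ⟨rfl, rfl⟩ | ⟨rfl, rfl⟩ <;> simp [f]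
      rw [this]
    · have ha : a ≠ v := fun hav ↦ he (honly _ hab.1 (hav ▸ Sym2.mem_mk_left a b))
      have hb : b ≠ v := fun hbv ↦ he (honly _ hab.1 (hbv ▸ Sym2.mem_mk_right a b))
      rw [hf a ha, hf b hb]
      exact .single ((fromEdgeSet_adj _).2 ⟨mem_erase.2 ⟨he, hab.1⟩, hab.2⟩)
  have hxy := (reachable_iff_reflTransGen x y).1
    (h.reachable x (mem_of_mem_erase hx) y (mem_of_mem_erase hy))
  have : Relation.ReflTransGen _ (f x) (f y) := Relation.ReflTransGen.lift' f hlift x y hxy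
  rwa [hf x (ne_of_mem_erase hx), hf y (ne_of_mem_erase hy),
    ← reachable_iff_reflTransGen] at this

lemma degree_ne_one_of_mem_leaves (hV : 3 ≤ #V) (hv : v ∈ leaves V E) (hvu : s(v, u) ∈ E) :
    degree E u ≠ 1 := by
  have huv : u ≠ v := fun huv ↦ h.not_isDiag _ hvu (huv ▸ Sym2.mk_isDiag_iff.2 rfl)
  have hu : u ∈ V.erase v :=
    mem_erase.2 ⟨huv, h.mem_of_mem_edge _ hvu u (Sym2.mem_mk_right v u)⟩
  have hV' : 2 ≤ #(V.erase v) := by rw [card_erase_of_mem (mem_filter.1 hv).1]; omega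
  have := (h.erase_leaf hv hvu).one_le_degree hV' hu
  have := degree_erase_add_one hvu (Sym2.mem_mk_right v u)
  omega

lemma eq_singleton_of_eq_pair {a b : α} (hab : a ≠ b) (hV : V = {a, b}) : E = {s(a, b)} := by
  have hsub : E ⊆ {s(a, b)} := by
    intro e he
    induction e using Sym2.ind with
    | h x y =>
      have hx := h.mem_of_mem_edge _ he x (Sym2.mem_mk_left x y)
      have hy := h.mem_of_mem_edge _ he y (Sym2.mem_mk_right x y)
      have hxy : x ≠ y := fun hxy ↦ h.not_isDiag _ he (Sym2.mk_isDiag_iff.2 hxy)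
      rw [hV, mem_insert, mem_singleton] at hx hy
      rcases hx with rfl | rfl <;> rcases hy with rfl | rfl <;> simp_all [Sym2.eq_swap]
  refine eq_of_subset_of_card_le hsub ?_
  have := h.card_add_one
  rw [hV, card_pair hab] at this
  simp only [card_singleton]
  omega

lemma degree_eq_one_of_card_eq_two (hV : #V = 2) (hx : x ∈ V) : degree E x = 1 := by
  obtain ⟨a, b, hab, rfl⟩ := card_eq_two.1 hV
  rw [h.eq_singleton_of_eq_pair hab rfl, degree, filter_singleton]
  rw [mem_insert, mem_singleton] at hx
  rcases hx with rfl | rfl <;> simp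

lemma eq_of_card_le_two {E' : Finset (Sym2 α)} (h' : IsSpanningTree V E') (hV : #V ≤ 2) :
    E = E' := by
  have := h.card_add_one
  have := h'.card_add_one
  obtain hV1 | hV2 : #V = 1 ∨ #V = 2 := by omega
  · rw [card_eq_zero.1 (by omega : #E = 0), card_eq_zero.1 (by omega : #E' = 0)]
  · obtain ⟨a, b, hab, hVab⟩ := card_eq_two.1 hV2
    rw [h.eq_singleton_of_eq_pair hab hVab, h'.eq_singleton_of_eq_pair hab hVab]

end IsSpanningTree

end Degree

section Prufer

variable {α : Type*} [LinearOrder α] {x : α}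

open Classical in
noncomputable def pruferCode (V : Finset α) (E : Finset (Sym2 α)) : List α :=
  if h : 3 ≤ #V ∧ (leaves V E).Nonempty then
    let v := (leaves V E).min' h.2
    if hu : ∃ u, s(v, u) ∈ E then
      hu.choose :: pruferCode (V.erase v) (E.erase s(v, hu.choose))
    else []
  else []
termination_by #V
decreasing_by exact card_erase_lt_of_mem (mem_filter.1 (min'_mem _ _)).1

lemma pruferCode_of_card_lt_three {V : Finset α} {E : Finset (Sym2 α)} (hV : #V < 3) :
    pruferCode V E = [] := by
  rw [pruferCode, dif_neg (by omega)]

namespace IsSpanningTree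

lemma pruferCode_eq_cons {V : Finset α} {E : Finset (Sym2 α)} (h : IsSpanningTree V E)
    (hV : 3 ≤ #V) :
    ∃ v u, IsLeast (leaves V E : Set α) v ∧ s(v, u) ∈ E ∧
      pruferCode V E = u :: pruferCode (V.erase v) (E.erase s(v, u)) := by
  have hL := h.leaves_nonempty (by omega)
  set v := (leaves V E).min' hL
  have hv : v ∈ leaves V E := min'_mem _ _
  have hu : ∃ u, s(v, u) ∈ E := by
    have : 0 < degree E v := by rw [(mem_filter.1 hv).2]; exact one_pos
    obtain ⟨e, he⟩ := card_pos.1 this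
    obtain ⟨he, hve⟩ := mem_filter.1 he
    obtain ⟨u, rfl⟩ := Sym2.mem_iff_exists.1 hve
    exact ⟨u, he⟩
  refine ⟨v, hu.choose, isLeast_min' _ hL, hu.choose_spec, ?_⟩
  rw [pruferCode, dif_pos ⟨hV, hL⟩]
  classical
  exact dif_pos hu

lemma mem_of_mem_pruferCode {V : Finset α} {E : Finset (Sym2 α)} (h : IsSpanningTree V E)
    (hx : x ∈ pruferCode V E) : x ∈ V := by
  by_cases hV : 3 ≤ #V
  · obtain ⟨v, u, hv, hvu, hcode⟩ := h.pruferCode_eq_cons hV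
    rw [hcode, List.mem_cons] at hx
    rcases hx with rfl | hx
    · exact h.mem_of_mem_edge _ hvu x (Sym2.mem_mk_right v x)
    · exact mem_of_mem_erase ((h.erase_leaf hv.1 hvu).mem_of_mem_pruferCode hx)
  · simp [pruferCode_of_card_lt_three (not_le.1 hV)] at hx
termination_by #V
decreasing_by exact card_erase_lt_of_mem (mem_filter.1 hv.1).1

lemma length_pruferCode {V : Finset α} {E : Finset (Sym2 α)} (h : IsSpanningTree V E) :
    (pruferCode V E).length = #V - 2 := by
  by_cases hV : 3 ≤ #V
  · obtain ⟨v, u, hv, hvu, hcode⟩ := h.pruferCode_eq_cons hV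
    rw [hcode, List.length_cons, (h.erase_leaf hv.1 hvu).length_pruferCode,
      card_erase_of_mem (mem_filter.1 hv.1).1]
    omega
  · rw [pruferCode_of_card_lt_three (not_le.1 hV), List.length_nil]
    omega
termination_by #V
decreasing_by exact card_erase_lt_of_mem (mem_filter.1 hv.1).1

lemma mem_pruferCode_iff {V : Finset α} {E : Finset (Sym2 α)} (h : IsSpanningTree V E)
    (hV : 2 ≤ #V) (hx : x ∈ V) : x ∈ pruferCode V E ↔ degree E x ≠ 1 := by
  by_cases hV3 : 3 ≤ #V
  · obtain ⟨v, u, hv, hvu, hcode⟩ := h.pruferCode_eq_cons hV3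
    have h' := h.erase_leaf hv.1 hvu
    rw [hcode, List.mem_cons]
    by_cases hxv : x = v
    · subst hxv
      have hxu : x ≠ u := fun hxu ↦ h.not_isDiag _ hvu (hxu ▸ Sym2.mk_isDiag_iff.2 rfl)
      simp only [hxu, false_or, (mem_filter.1 hv.1).2, ne_eq, not_true_eq_false, iff_false]
      exact fun hmem ↦ notMem_erase x V (h'.mem_of_mem_pruferCode hmem)
    by_cases hxu : x = u
    · subst hxu
      simp only [true_or, true_iff]
      exact h.degree_ne_one_of_mem_leaves hV3 hv.1 hvu
    have hV' : 2 ≤ #(V.erase v) := by rw [card_erase_of_mem (mem_filter.1 hv.1).1]; omega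
    rw [h'.mem_pruferCode_iff hV' (mem_erase.2 ⟨hxv, hx⟩),
      degree_erase_of_notMem (by simp [hxv, hxu])]
    simp [hxu]
  · rw [pruferCode_of_card_lt_three (not_le.1 hV3), h.degree_eq_one_of_card_eq_two (by omega) hx]
    simp
termination_by #V
decreasing_by exact card_erase_lt_of_mem (mem_filter.1 hv.1).1

lemma leaves_eq {V : Finset α} {E : Finset (Sym2 α)} (h : IsSpanningTree V E) (hV : 2 ≤ #V) :
    leaves V E = {x ∈ V | x ∉ pruferCode V E} := by
  ext x
  simp +contextual [leaves, h.mem_pruferCode_iff hV]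

lemma eq_of_pruferCode_eq {V : Finset α} {E E' : Finset (Sym2 α)} (h : IsSpanningTree V E)
    (h' : IsSpanningTree V E') (hcode : pruferCode V E = pruferCode V E') : E = E' := by
  by_cases hV : 3 ≤ #V
  · obtain ⟨v, u, hv, hvu, hc⟩ := h.pruferCode_eq_cons hV
    obtain ⟨v', u', hv', hvu', hc'⟩ := h'.pruferCode_eq_cons hV
    -- the code determines the leaves, hence the deleted leaf; its head is that leaf's neighbour
    have hleaves : leaves V E = leaves V E' := by
      rw [h.leaves_eq (by omega), h'.leaves_eq (by omega), hcode]
    obtain rfl : v = v' := hv.unique (hleaves ▸ hv')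
    rw [hc, hc', List.cons.injEq] at hcode
    obtain ⟨rfl, htail⟩ := hcode
    have := (h.erase_leaf hv.1 hvu).eq_of_pruferCode_eq (h'.erase_leaf hv'.1 hvu') htail
    rw [← insert_erase hvu, this, insert_erase hvu']
  · exact h.eq_of_card_le_two h' (by omega)
termination_by #V
decreasing_by exact card_erase_lt_of_mem (mem_filter.1 hv.1).1

end IsSpanningTree

open Classical in
theorem card_isSpanningTree_le [Fintype α] (V : Finset α) :
    #{E : Finset (Sym2 α) | IsSpanningTree V E} ≤ #V ^ (#V - 2) := by
  refine card_le_pow_of_injOn_list (pruferCode V) ?_ ?_ ?_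
  · intro E hE E' hE' hcode
    exact (mem_filter.1 hE).2.eq_of_pruferCode_eq (mem_filter.1 hE').2 hcode
  · exact fun E hE ↦ (mem_filter.1 hE).2.length_pruferCode
  · exact fun E hE x hx ↦ (mem_filter.1 hE).2.mem_of_mem_pruferCode hx

end Prufer

end EdgeFinset

open EdgeFinset

lemma SimpleGraph.ConnectedComponent.exists_isSpanningTree {V : Type*} [Fintype V]
    {G : SimpleGraph V} (C : G.ConnectedComponent) {W : Finset V} (hW : (W : Set V) = C.supp) :
    ∃ E : Finset (Sym2 V), IsSpanningTree W E ∧ ∀ e ∈ E, e ∈ G.edgeSet := by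
  classical
  obtain ⟨T, hTle, hT⟩ := C.connected_toSimpleGraph.exists_isTree_le
  set H := T.map (Function.Embedding.subtype _)
  have hHle : H ≤ G := by
    intro a b hab
    obtain ⟨x, y, hxy, rfl, rfl⟩ := (map_adj _ _ _ _).1 hab
    exact C.toSimpleGraph_hom.map_adj (hTle hxy)
  have hmemW : ∀ x ∈ W, x ∈ C := fun x hx ↦ by rw [← mem_coe, hW] at hx; exact hx
  refine ⟨H.edgeFinset, ⟨?_, ?_, ?_, ?_⟩, fun e he ↦ edgeSet_mono hHle (mem_edgeFinset.1 he)⟩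
  · intro e he x hx
    rw [edgeFinset_map, mem_map] at he
    obtain ⟨e, -, rfl⟩ := he
    obtain ⟨y, -, rfl⟩ := Sym2.mem_map.1 hx
    rw [← mem_coe, hW]
    exact y.2
  · exact fun e he ↦ not_isDiag_of_mem_edgeSet H (mem_edgeFinset.1 he)
  · rw [card_edgeFinset_map, edgeFinset, Set.toFinset_card, ← Nat.card_eq_fintype_card,
      (isTree_iff_connected_and_card.1 hT).2, ← Set.ncard_coe_finset, hW]
    rfl
  · intro x hx y hy
    rw [coe_edgeFinset, fromEdgeSet_edgeSet]
    exact (hT.connected ⟨x, hmemW x hx⟩ ⟨y, hmemW y hy⟩).map (Embedding.map _ T).toHom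

open Classical in
lemma MeasureTheory.integral_le_card_mul_of_le_card_filter {Ω ι : Type*} [MeasurableSpace Ω]
    {μ : Measure Ω} {f : Ω → ℝ} (s : Finset ι) {A : ι → Set Ω}
    (hA : ∀ i ∈ s, MeasurableSet (A i)) {B : ℝ} (hB : 0 ≤ B)
    (hμA : ∀ i ∈ s, μ (A i) ≤ ENNReal.ofReal B) (hf₀ : ∀ ω, 0 ≤ f ω)
    (hf : ∀ ω, f ω ≤ #{i ∈ s | ω ∈ A i}) : ∫ ω, f ω ∂μ ≤ #s * B := by
  have hint : ∀ i ∈ s, Integrable ((A i).indicator (1 : Ω → ℝ)) μ := fun i hi ↦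
    (integrable_indicator_iff (hA i hi)).2 <|
      integrableOn_const ((hμA i hi).trans_lt ENNReal.ofReal_lt_top).ne
  calc ∫ ω, f ω ∂μ ≤ ∫ ω, ∑ i ∈ s, (A i).indicator 1 ω ∂μ := by
        refine integral_mono_of_nonneg (ae_of_all _ hf₀) (integrable_finsetSum s hint)
          (ae_of_all _ fun ω ↦ ?_)
        simpa only [natCast_card_filter, Set.indicator_apply, Pi.one_apply] using hf ω
    _ = ∑ i ∈ s, μ.real (A i) := by
        rw [integral_finsetSum s hint]
        exact sum_congr rfl fun i hi ↦ integral_indicator_one (hA i hi)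
    _ ≤ ∑ _i ∈ s, B := sum_le_sum fun i hi ↦ ENNReal.toReal_le_of_le_ofReal hB (hμA i hi)
    _ = #s * B := by rw [sum_const, nsmul_eq_mul]

namespace EdgeIdx

variable {n : ℕ}

instance : Fintype (EdgeIdx n) := inferInstanceAs (Fintype {e : Sym2 (Fin n) // ¬ e.IsDiag})

instance : DecidableEq (EdgeIdx n) :=
  inferInstanceAs (DecidableEq {e : Sym2 (Fin n) // ¬ e.IsDiag})

def edgesOf (S : Finset (Sym2 (Fin n))) : Finset (EdgeIdx n) :=
  S.subtype fun e : Sym2 (Fin n) ↦ ¬ e.IsDiag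

def boundary (V : Finset (Fin n)) : Finset (EdgeIdx n) :=
  edgesOf ((V ×ˢ Vᶜ).image fun q ↦ s(q.1, q.2))

lemma mem_edgesOf {S : Finset (Sym2 (Fin n))} {e : EdgeIdx n} : e ∈ edgesOf S ↔ e.1 ∈ S :=
  mem_subtype

lemma card_edgesOf {S : Finset (Sym2 (Fin n))} (hS : ∀ e ∈ S, ¬ e.IsDiag) :
    #(edgesOf S) = #S := by
  conv_rhs => rw [← filter_true_of_mem hS]
  exact card_subtype _ S

lemma mem_boundary {V : Finset (Fin n)} {e : EdgeIdx n} :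
    e ∈ boundary V ↔ ∃ x ∈ V, ∃ y ∉ V, s(x, y) = e.1 := by
  simp [boundary, mem_edgesOf, and_assoc]

lemma card_boundary (V : Finset (Fin n)) : #(boundary V) = #V * (n - #V) := by
  have hinj : Set.InjOn (fun q : Fin n × Fin n ↦ s(q.1, q.2)) ↑(V ×ˢ Vᶜ) := by
    rintro ⟨x, y⟩ hxy ⟨x', y'⟩ hxy' h
    simp only [coe_product, Set.mem_prod, mem_coe, mem_compl] at hxy hxy'
    rcases Sym2.eq_iff.1 h with ⟨rfl, rfl⟩ | ⟨rfl, rfl⟩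
    · rfl
    · exact absurd hxy.1 hxy'.2
  rw [boundary, card_edgesOf, card_image_of_injOn hinj, card_product, card_compl,
    Fintype.card_fin]
  simp only [mem_image, mem_product, mem_compl]
  rintro _ ⟨⟨x, y⟩, ⟨hx, hy⟩, rfl⟩ hxy
  exact hy (Sym2.mk_isDiag_iff.1 hxy ▸ hx)

lemma disjoint_boundary_edgesOf {V : Finset (Fin n)} {E : Finset (Sym2 (Fin n))}
    (hE : ∀ e ∈ E, ∀ x ∈ e, x ∈ V) : Disjoint (boundary V) (edgesOf E) := by
  refine disjoint_left.2 fun e he he' ↦ ?_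
  obtain ⟨x, -, y, hy, hxy⟩ := mem_boundary.1 he
  exact hy (hE _ (mem_edgesOf.1 he') y (hxy ▸ Sym2.mem_mk_right x y))

end EdgeIdx

open EdgeIdx

section RandomGraph

variable {n : ℕ} {Ω : Type*}

lemma mem_edgeSet_graphOf (X : EdgeIdx n → Ω → ℝ) (p : ℝ) (ω : Ω) (e : EdgeIdx n) :
    e.1 ∈ (graphOf X p ω).edgeSet ↔ X e ω ≤ p := by
  obtain ⟨e, he⟩ := e
  induction e using Sym2.ind with
  | h x y => exact ⟨fun ⟨_, hle⟩ ↦ hle, fun hle ↦ ⟨fun hxy ↦ he (Sym2.mk_isDiag_iff.2 hxy), hle⟩⟩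

open Classical in
noncomputable def spanningTreesOfCard (n k : ℕ) :
    Finset (Finset (Fin n) × Finset (Sym2 (Fin n))) :=
  {q | #q.1 = k ∧ IsSpanningTree q.1 q.2}

lemma card_spanningTreesOfCard_le (n k : ℕ) :
    #(spanningTreesOfCard n k) ≤ n.choose k * k ^ (k - 2) := by
  classical
  have hfiber : ∀ V ∈ (spanningTreesOfCard n k).image Prod.fst,
      #{q ∈ spanningTreesOfCard n k | q.1 = V} ≤ k ^ (k - 2) := by
    intro V hV
    obtain ⟨q, hq, rfl⟩ := mem_image.1 hV
    have hk := (mem_filter.1 hq).2.1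
    refine (card_le_card_of_injOn Prod.snd (t := {E | IsSpanningTree q.1 E}) ?_ ?_).trans
      (hk ▸ card_isSpanningTree_le q.1)
    · intro r hr
      obtain ⟨hr, hrq⟩ := mem_filter.1 hr
      exact mem_filter.2 ⟨mem_univ _, hrq ▸ (mem_filter.1 hr).2.2⟩
    · intro r hr r' hr' h
      exact Prod.ext ((mem_filter.1 hr).2.trans (mem_filter.1 hr').2.symm) h
  have himage : (spanningTreesOfCard n k).image Prod.fst ⊆ univ.powersetCard k := by
    intro V hV
    obtain ⟨q, hq, rfl⟩ := mem_image.1 hV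
    exact mem_powersetCard.2 ⟨subset_univ _, (mem_filter.1 hq).2.1⟩
  calc #(spanningTreesOfCard n k)
      ≤ k ^ (k - 2) * #((spanningTreesOfCard n k).image Prod.fst) :=
        card_le_mul_card_image _ _ hfiber
    _ ≤ k ^ (k - 2) * n.choose k := by
        gcongr
        simpa using card_le_card himage
    _ = n.choose k * k ^ (k - 2) := mul_comm _ _

def isolatedTreeEvent (X : EdgeIdx n → Ω → ℝ) (p : ℝ)
    (q : Finset (Fin n) × Finset (Sym2 (Fin n))) : Set Ω :=
  {ω | (∀ s ∈ boundary q.1, p < X s ω) ∧ (∀ t ∈ edgesOf q.2, X t ω ≤ p)}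

lemma measurableSet_isolatedTreeEvent [MeasurableSpace Ω] {X : EdgeIdx n → Ω → ℝ}
    (hX : ∀ e, Measurable (X e)) (p : ℝ) (q : Finset (Fin n) × Finset (Sym2 (Fin n))) :
    MeasurableSet (isolatedTreeEvent X p q) := by
  simp only [isolatedTreeEvent, Set.ofPred_and, Set.ofPred_forall]
  measurability

open Classical in
lemma numComponents_le_card_filter (X : EdgeIdx n → Ω → ℝ) (p : ℝ) (k : ℕ) (ω : Ω) :
    numComponents X p k ω ≤ #{q ∈ spanningTreesOfCard n k | ω ∈ isolatedTreeEvent X p q} := by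
  set G := graphOf X p ω
  have htree : ∀ c : G.ConnectedComponent, ∃ q : Finset (Fin n) × Finset (Sym2 (Fin n)),
      (q.1 : Set (Fin n)) = c.supp ∧ IsSpanningTree q.1 q.2 ∧ ∀ e ∈ q.2, e ∈ G.edgeSet := by
    intro c
    obtain ⟨E, hE, hEG⟩ := c.exists_isSpanningTree (Set.toFinite c.supp).coe_toFinset
    exact ⟨(_, E), (Set.toFinite c.supp).coe_toFinset, hE, hEG⟩
  choose q hqV hqT hqG using htree
  have hmem : ∀ c : G.ConnectedComponent, Nat.card c.supp = k →
      q c ∈ {q ∈ spanningTreesOfCard n k | ω ∈ isolatedTreeEvent X p q} := by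
    intro c hc
    refine mem_filter.2 ⟨mem_filter.2 ⟨mem_univ _, ?_, hqT c⟩, fun s hs ↦ ?_, fun t ht ↦ ?_⟩
    · rw [← hc, ← hqV c, Nat.card_coe_set_eq, Set.ncard_coe_finset]
    · obtain ⟨x, hx, y, hy, hxy⟩ := mem_boundary.1 hs
      by_contra hle
      have hadj : G.Adj x y := by
        rw [← mem_edgeSet, hxy]
        exact (mem_edgeSet_graphOf X p ω s).2 (not_lt.1 hle)
      rw [← mem_coe, hqV] at hx hy
      exact hy ((c.mem_supp_congr_adj hadj).1 hx)
    · exact (mem_edgeSet_graphOf X p ω t).1 (hqG c _ (mem_edgesOf.1 ht))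
  have hinj : Function.Injective fun c : {c : G.ConnectedComponent // Nat.card c.supp = k} ↦
      (⟨q c, hmem c c.2⟩ :
        {q // q ∈ ({q ∈ spanningTreesOfCard n k | ω ∈ isolatedTreeEvent X p q} : Finset _)}) := by
    intro c c' h
    refine Subtype.ext (ConnectedComponent.supp_inj.1 ?_)
    rw [← hqV c, ← hqV c']
    exact congrArg (fun q ↦ (q.1 : Set (Fin n))) (congrArg Subtype.val h)
  exact (Nat.card_le_card_of_injective _ hinj).trans_eq (Nat.card_eq_finsetCard _)

end RandomGraph

theorem expected_components_of_order_k_general {Ω : Type*} [MeasurableSpace Ω]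
    (μ : Measure Ω) (n : ℕ)
    (X : EdgeIdx n → Ω → ℝ)
    (hmeas : ∀ e, Measurable (X e))
    (a b M σ : ℝ) (hb : 0 < b) (hσ : 0 < σ)
    (hST : ∀ (S T : Finset (EdgeIdx n)), Disjoint S T → ∀ p : ℝ, 0 < p →
      μ {ω | (∀ s ∈ S, p < X s ω) ∧ (∀ t ∈ T, X t ω ≤ p)} ≤
        ENNReal.ofReal (Real.exp (-a * p * S.card / M) * (b * p / σ) ^ T.card))
    (p : ℝ) (hp : 0 < p) (k : ℕ) :
    ∫ ω, (numComponents X p k ω : ℝ) ∂μ ≤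
      (n.choose k : ℝ) * (k : ℝ) ^ (k - 2) *
        Real.exp (-a * p * k * (n - k) / M) * (b * p / σ) ^ (k - 1) := by
  classical
  set B := Real.exp (-a * p * k * (n - k) / M) * (b * p / σ) ^ (k - 1)
  have hμ : ∀ q ∈ spanningTreesOfCard n k, μ (isolatedTreeEvent X p q) ≤ ENNReal.ofReal B := by
    intro q hq
    obtain ⟨hk, hT⟩ := (mem_filter.1 hq).2
    have hkn : k ≤ n := hk ▸ (card_le_univ q.1).trans_eq (Fintype.card_fin n)
    have hS : (#(boundary q.1) : ℝ) = k * (n - k) := by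
      rw [card_boundary, hk, Nat.cast_mul, Nat.cast_sub hkn]
    have hE : #(edgesOf q.2) = k - 1 := by
      have := hT.card_add_one
      rw [card_edgesOf hT.not_isDiag]
      omega
    refine (hST _ _ (disjoint_boundary_edgesOf hT.mem_of_mem_edge) p hp).trans_eq ?_
    rw [hS, hE, ← mul_assoc]
  calc ∫ ω, (numComponents X p k ω : ℝ) ∂μ ≤ #(spanningTreesOfCard n k) * B :=
        integral_le_card_mul_of_le_card_filter _
          (fun q _ ↦ measurableSet_isolatedTreeEvent hmeas p q) (by positivity) hμ
          (fun ω ↦ by positivity) (fun ω ↦ mod_cast numComponents_le_card_filter X p k ω)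
    _ ≤ (n.choose k * k ^ (k - 2) : ℕ) * B := by
        gcongr
        exact card_spanningTreesOfCard_le n k
    _ = _ := by push_cast; ring

theorem expected_components_of_order_k {Ω : Type*} [MeasurableSpace Ω]
    (μ : Measure Ω) [IsProbabilityMeasure μ] (n : ℕ) (hn : 2 ≤ n)
    (X : EdgeIdx n → Ω → ℝ)
    (hmeas : ∀ e, Measurable (X e))
    (hnonneg : ∀ e ω, 0 ≤ X e ω)
    (a b M σ : ℝ) (ha : 0 < a) (hb : 0 < b) (hM : 0 < M) (hσ : 0 < σ)
    (hST : ∀ (S T : Finset (EdgeIdx n)), Disjoint S T → ∀ p : ℝ, 0 < p →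
      μ {ω | (∀ s ∈ S, p < X s ω) ∧ (∀ t ∈ T, X t ω ≤ p)} ≤
        ENNReal.ofReal (Real.exp (-a * p * S.card / M) * (b * p / σ) ^ T.card))
    (p : ℝ) (hp : 0 < p) (k : ℕ) (hk : 1 ≤ k) (hkn : k ≤ n) :
    ∫ ω, (numComponents X p k ω : ℝ) ∂μ ≤
      (n.choose k : ℝ) * (k : ℝ) ^ (k - 2) *
        Real.exp (-a * p * k * (n - k) / M) * (b * p / σ) ^ (k - 1) :=
  expected_components_of_order_k_general μ n X hmeas a b M σ hb hσ hST p hp k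
end
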